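/- arXiv:1609.04609 — 2 statements merged into one kernel-verified Lean document; each statement's English description precedes it below -/
import Mathlib

section
/- Let Q be a prime (not necessarily unital) associative ring whose core H (the intersection of all nonzero two-sided ideals of Q) is nonzero. Let (R, L) be an orthogonal pair of Q and let B be a nonzero additive subgroup with RL ⊆ B ⊆ R ∩ L. Then BH = RH and HB = HL, where for subsets A, C of Q, AC denotes the additive subgroup generated by all products a·c with a ∈ A, c ∈ C. -/
/-- A right ideal of a (not necessarily unital) ring: an additive subgroup `R` with `RQ ⊆ R`. -/
def IsRightIdeal {Q : Type*} [NonUnitalRing Q] (R : AddSubgroup Q) : Prop :=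
  ∀ r ∈ R, ∀ x : Q, r * x ∈ R

/-- A left ideal of a (not necessarily unital) ring: an additive subgroup `L` with `QL ⊆ L`. -/
def IsLeftIdeal {Q : Type*} [NonUnitalRing Q] (L : AddSubgroup Q) : Prop :=
  ∀ l ∈ L, ∀ x : Q, x * l ∈ L

/-- A two-sided ideal: an additive subgroup `I` with `QI ⊆ I` and `IQ ⊆ I`. -/
def IsTwoSidedIdealSub {Q : Type*} [NonUnitalRing Q] (I : AddSubgroup Q) : Prop :=
  (∀ a ∈ I, ∀ x : Q, x * a ∈ I) ∧ (∀ a ∈ I, ∀ x : Q, a * x ∈ I)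

/-- The core of `Q`: the intersection of all nonzero two-sided ideals of `Q`. -/
def ringCore (Q : Type*) [NonUnitalRing Q] : AddSubgroup Q :=
  sInf {I : AddSubgroup Q | IsTwoSidedIdealSub I ∧ I ≠ ⊥}

/-- A (not necessarily unital) ring is prime if `aQb = 0` implies `a = 0` or `b = 0`. -/
def IsPrimeRing (Q : Type*) [NonUnitalRing Q] : Prop :=
  ∀ a b : Q, (∀ x : Q, a * x * b = 0) → a = 0 ∨ b = 0

/-- An orthogonal pair: a nonzero right ideal `R` and a nonzero left ideal `L` with `LR = 0`. -/
def IsOrthPair {Q : Type*} [NonUnitalRing Q] (R L : AddSubgroup Q) : Prop :=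
  IsRightIdeal R ∧ IsLeftIdeal L ∧ R ≠ ⊥ ∧ L ≠ ⊥ ∧ ∀ l ∈ L, ∀ r ∈ R, l * r = 0

/-- For subsets `A`, `C` of `Q`, the additive subgroup generated by all products `a * c`. -/
def setMul {Q : Type*} [NonUnitalRing Q] (A C : Set Q) : AddSubgroup Q :=
  AddSubgroup.closure {x : Q | ∃ a ∈ A, ∃ c ∈ C, x = a * c}

section aux
variable {Q : Type*} [NonUnitalRing Q]

lemma mul_mem_setMul {A C : Set Q} {a c : Q} (ha : a ∈ A) (hc : c ∈ C) :
    a * c ∈ setMul A C :=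
  AddSubgroup.subset_closure ⟨a, ha, c, hc, rfl⟩

lemma setMul_le {A C : Set Q} {S : AddSubgroup Q}
    (h : ∀ a ∈ A, ∀ c ∈ C, a * c ∈ S) : setMul A C ≤ S := by
  rw [setMul, AddSubgroup.closure_le]
  rintro x ⟨a, ha, c, hc, rfl⟩
  exact h a ha c hc

lemma core_ideal : IsTwoSidedIdealSub (ringCore Q) := by
  constructor <;>
    · intro a ha x
      rw [ringCore, AddSubgroup.mem_sInf] at ha ⊢
      intro I hI
      first
        | exact hI.1.1 a (ha I hI) x
        | exact hI.1.2 a (ha I hI) x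

lemma core_le {I : AddSubgroup Q} (h1 : IsTwoSidedIdealSub I) (h2 : I ≠ ⊥) :
    ringCore Q ≤ I := sInf_le ⟨h1, h2⟩

lemma core_sq (hprime : IsPrimeRing Q) (hcore : ringCore Q ≠ ⊥) :
    ringCore Q ≤ setMul (ringCore Q : Set Q) (ringCore Q : Set Q) := by
  apply core_le
  · constructor
    · intro a ha x
      have key : setMul (ringCore Q : Set Q) (ringCore Q : Set Q) ≤
          (setMul (ringCore Q : Set Q) (ringCore Q : Set Q)).comap
            (AddMonoidHom.mulLeft x) := by
        apply setMul_le
        intro h1 hh1 h2 hh2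
        have : x * (h1 * h2) = (x * h1) * h2 := (mul_assoc x h1 h2).symm
        simpa [AddSubgroup.mem_comap, this] using
          mul_mem_setMul (core_ideal.1 h1 hh1 x) hh2
      exact key ha
    · intro a ha x
      have key : setMul (ringCore Q : Set Q) (ringCore Q : Set Q) ≤
          (setMul (ringCore Q : Set Q) (ringCore Q : Set Q)).comap
            (AddMonoidHom.mulRight x) := by
        apply setMul_le
        intro h1 hh1 h2 hh2
        have : (h1 * h2) * x = h1 * (h2 * x) := mul_assoc h1 h2 x
        simpa [AddSubgroup.mem_comap, this] using
          mul_mem_setMul hh1 (core_ideal.2 h2 hh2 x)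
      exact key ha
  · intro hbot
    obtain ⟨a, haH, hane⟩ : ∃ a ∈ ringCore Q, a ≠ 0 := by
      by_contra hc
      push_neg at hc
      exact hcore (AddSubgroup.eq_bot_iff_forall _ |>.mpr hc)
    rcases hprime a a (fun x => by
      have : a * x * a ∈ setMul (ringCore Q : Set Q) (ringCore Q : Set Q) :=
        mul_mem_setMul (core_ideal.2 a haH x) haH
      rw [hbot] at this
      exact this) with h | h <;> exact hane h

end aux

/-- Lemma 4.1: in a prime ring `Q` with nonzero core `H`, if `B` is a nonzero additive
subgroup with `RL ⊆ B ⊆ R ∩ L` for an orthogonal pair `(R, L)`, then `BH = RH` and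
`HB = HL`. -/
theorem mul_core_eq {Q : Type*} [NonUnitalRing Q]
    (hprime : IsPrimeRing Q) (hcore : ringCore Q ≠ ⊥)
    (R L : AddSubgroup Q) (h : IsOrthPair R L)
    (B : AddSubgroup Q) (hBne : B ≠ ⊥)
    (hB1 : ∀ r ∈ R, ∀ l ∈ L, r * l ∈ B)
    (hB2 : (B : Set Q) ⊆ (R : Set Q) ∩ (L : Set Q)) :
    setMul (B : Set Q) (ringCore Q : Set Q) = setMul (R : Set Q) (ringCore Q : Set Q) ∧
      setMul (ringCore Q : Set Q) (B : Set Q) = setMul (ringCore Q : Set Q) (L : Set Q) := by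
  obtain ⟨hRid, hLid, hRne, hLne, hLR⟩ := h
  -- the ideal generated by L
  set JL : AddSubgroup Q := L ⊔ setMul (L : Set Q) (Set.univ : Set Q) with hJL
  have hJLideal : IsTwoSidedIdealSub JL := by
    constructor
    · intro a ha x
      have key : JL ≤ JL.comap (AddMonoidHom.mulLeft x) := by
        apply sup_le
        · intro y hy
          simp only [AddSubgroup.mem_comap, AddMonoidHom.coe_mulLeft]
          exact AddSubgroup.mem_sup_left (hLid y hy x)
        · apply setMul_le
          intro l hl q _
          simp only [AddSubgroup.mem_comap, AddMonoidHom.coe_mulLeft]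
          have : x * (l * q) = (x * l) * q := (mul_assoc x l q).symm
          rw [this]
          exact AddSubgroup.mem_sup_right (mul_mem_setMul (hLid l hl x) (Set.mem_univ q))
      exact key ha
    · intro a ha x
      have key : JL ≤ JL.comap (AddMonoidHom.mulRight x) := by
        apply sup_le
        · intro y hy
          simp only [AddSubgroup.mem_comap, AddMonoidHom.coe_mulRight]
          exact AddSubgroup.mem_sup_right (mul_mem_setMul hy (Set.mem_univ x))
        · apply setMul_le
          intro l hl q _
          simp only [AddSubgroup.mem_comap, AddMonoidHom.coe_mulRight]
          have : (l * q) * x = l * (q * x) := mul_assoc l q x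
          rw [this]
          exact AddSubgroup.mem_sup_right (mul_mem_setMul hl (Set.mem_univ (q * x)))
      exact key ha
  have hJLne : JL ≠ ⊥ := fun hb => hLne (by
    rw [eq_bot_iff]; exact le_trans le_sup_left (le_of_eq hb))
  have hHJL : ringCore Q ≤ JL := core_le hJLideal hJLne
  -- the ideal generated by R
  set JR : AddSubgroup Q := R ⊔ setMul (Set.univ : Set Q) (R : Set Q) with hJR
  have hJRideal : IsTwoSidedIdealSub JR := by
    constructor
    · intro a ha x
      have key : JR ≤ JR.comap (AddMonoidHom.mulLeft x) := by
        apply sup_le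
        · intro y hy
          simp only [AddSubgroup.mem_comap, AddMonoidHom.coe_mulLeft]
          exact AddSubgroup.mem_sup_right (mul_mem_setMul (Set.mem_univ x) hy)
        · apply setMul_le
          intro q _ r hr
          simp only [AddSubgroup.mem_comap, AddMonoidHom.coe_mulLeft]
          have : x * (q * r) = (x * q) * r := (mul_assoc x q r).symm
          rw [this]
          exact AddSubgroup.mem_sup_right (mul_mem_setMul (Set.mem_univ (x * q)) hr)
      exact key ha
    · intro a ha x
      have key : JR ≤ JR.comap (AddMonoidHom.mulRight x) := by
        apply sup_le
        · intro y hy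
          simp only [AddSubgroup.mem_comap, AddMonoidHom.coe_mulRight]
          exact AddSubgroup.mem_sup_left (hRid y hy x)
        · apply setMul_le
          intro q _ r hr
          simp only [AddSubgroup.mem_comap, AddMonoidHom.coe_mulRight]
          have : (q * r) * x = q * (r * x) := mul_assoc q r x
          rw [this]
          exact AddSubgroup.mem_sup_right (mul_mem_setMul (Set.mem_univ q) (hRid r hr x))
      exact key ha
  have hJRne : JR ≠ ⊥ := fun hb => hRne (by
    rw [eq_bot_iff]; exact le_trans le_sup_left (le_of_eq hb))
  have hHJR : ringCore Q ≤ JR := core_le hJRideal hJRne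
  have hsq := core_sq hprime hcore
  constructor
  · apply le_antisymm
    · exact setMul_le fun b hb c hc => mul_mem_setMul (hB2 hb).1 hc
    · apply setMul_le
      intro r hr hh hhH
      -- hh ∈ H ≤ HH; show r * hh ∈ setMul B H
      have key : setMul (ringCore Q : Set Q) (ringCore Q : Set Q) ≤
          (setMul (B : Set Q) (ringCore Q : Set Q)).comap (AddMonoidHom.mulLeft r) := by
        apply setMul_le
        intro h1 hh1 h2 hh2
        simp only [AddSubgroup.mem_comap, AddMonoidHom.coe_mulLeft]
        have e1 : r * (h1 * h2) = (AddMonoidHom.mulRight h2).comp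
            (AddMonoidHom.mulLeft r) h1 := by
          simp [mul_assoc]
        rw [e1]
        have : JL ≤ (setMul (B : Set Q) (ringCore Q : Set Q)).comap
            ((AddMonoidHom.mulRight h2).comp (AddMonoidHom.mulLeft r)) := by
          apply sup_le
          · intro l hl
            simp only [AddSubgroup.mem_comap, AddMonoidHom.comp_apply,
              AddMonoidHom.coe_mulLeft, AddMonoidHom.coe_mulRight]
            exact mul_mem_setMul (hB1 r hr l hl) hh2
          · apply setMul_le
            intro l hl q _
            simp only [AddSubgroup.mem_comap, AddMonoidHom.comp_apply,
              AddMonoidHom.coe_mulLeft, AddMonoidHom.coe_mulRight]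
            have : r * (l * q) * h2 = (r * l) * (q * h2) := by
              rw [← mul_assoc, ← mul_assoc]
            rw [this]
            exact mul_mem_setMul (hB1 r hr l hl) (core_ideal.1 h2 hh2 q)
        exact this (hHJL hh1)
      exact key (hsq hhH)
  · apply le_antisymm
    · exact setMul_le fun c hc b hb => mul_mem_setMul hc (hB2 hb).2
    · apply setMul_le
      intro hh hhH l hl
      have key : setMul (ringCore Q : Set Q) (ringCore Q : Set Q) ≤
          (setMul (ringCore Q : Set Q) (B : Set Q)).comap (AddMonoidHom.mulRight l) := by
        apply setMul_le
        intro h1 hh1 h2 hh2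
        simp only [AddSubgroup.mem_comap, AddMonoidHom.coe_mulRight]
        have e1 : (h1 * h2) * l = (AddMonoidHom.mulRight l).comp
            (AddMonoidHom.mulLeft h1) h2 := by
          simp [mul_assoc]
        rw [e1]
        have : JR ≤ (setMul (ringCore Q : Set Q) (B : Set Q)).comap
            ((AddMonoidHom.mulRight l).comp (AddMonoidHom.mulLeft h1)) := by
          apply sup_le
          · intro r hr
            simp only [AddSubgroup.mem_comap, AddMonoidHom.comp_apply,
              AddMonoidHom.coe_mulLeft, AddMonoidHom.coe_mulRight]
            have : h1 * r * l = h1 * (r * l) := mul_assoc _ _ _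
            rw [this]
            exact mul_mem_setMul hh1 (hB1 r hr l hl)
          · apply setMul_le
            intro q _ r hr
            simp only [AddSubgroup.mem_comap, AddMonoidHom.comp_apply,
              AddMonoidHom.coe_mulLeft, AddMonoidHom.coe_mulRight]
            have : h1 * (q * r) * l = (h1 * q) * (r * l) := by
              rw [← mul_assoc, mul_assoc (h1*q)]
            rw [this]
            exact mul_mem_setMul (core_ideal.2 h1 hh1 q) (hB1 r hr l hl)
        exact this (hHJR hh2)
      exact key (hsq hhH)
end

section
/- Let Q be a prime (not necessarily unital) associative ring with nonzero core containing a nonzero nilpotent element. Then the map R ↦ R ∩ lann(R) is a bijection from the set of all proper nonzero annihilator right ideals of Q (i.e., right ideals R with 0 ≠ R ≠ Q and R = rann(S) for some subset S of Q) onto the set of all maximal zero product subsets of Q. -/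
/-- The left annihilator of a subset `S`. -/
def lann {Q : Type*} [NonUnitalRing Q] (S : Set Q) : Set Q := {a : Q | ∀ s ∈ S, a * s = 0}

/-- The right annihilator of a subset `S`. -/
def rann {Q : Type*} [NonUnitalRing Q] (S : Set Q) : Set Q := {a : Q | ∀ s ∈ S, s * a = 0}

/-- `npow1 x n = x ^ (n + 1)`: positive powers in a not necessarily unital ring. -/
def npow1 {Q : Type*} [NonUnitalRing Q] (x : Q) : ℕ → Q
  | 0 => x
  | n + 1 => npow1 x n * x

/-- A nonempty subset `S` of `Q` has zero product if `S² = 0`. -/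
def HasZeroProduct {Q : Type*} [NonUnitalRing Q] (S : Set Q) : Prop :=
  S.Nonempty ∧ ∀ s ∈ S, ∀ t ∈ S, s * t = 0

/-- A maximal zero product subset: maximal under inclusion among zero product subsets. -/
def IsMaxZeroProduct {Q : Type*} [NonUnitalRing Q] (S : Set Q) : Prop :=
  HasZeroProduct S ∧ ∀ T : Set Q, HasZeroProduct T → S ⊆ T → S = T

/-- A regular inner ideal: an additive subgroup `B` with `BQB ⊆ B` and `B² = 0`. -/
def IsRegInner {Q : Type*} [NonUnitalRing Q] (B : AddSubgroup Q) : Prop :=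
  (∀ b ∈ B, ∀ x : Q, ∀ b' ∈ B, b * x * b' ∈ B) ∧ (∀ b ∈ B, ∀ b' ∈ B, b * b' = 0)

/-- A maximal regular inner ideal: maximal under inclusion among regular inner ideals. -/
def IsMaxRegInner {Q : Type*} [NonUnitalRing Q] (B : AddSubgroup Q) : Prop :=
  IsRegInner B ∧ ∀ B' : AddSubgroup Q, IsRegInner B' → B ≤ B' → B = B'

section AuxLemmas

variable {Q : Type*} [NonUnitalRing Q]

lemma npow1_add (x : Q) (a b : ℕ) : npow1 x (a + b + 1) = npow1 x a * npow1 x b := by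
  induction b with
  | zero => rfl
  | succ b ih =>
    have h : a + (b + 1) + 1 = (a + b + 1) + 1 := by omega
    rw [h]
    show npow1 x (a + b + 1) * x = _
    rw [ih, mul_assoc]
    rfl

lemma npow1_zero_of_le {x : Q} {n : ℕ} (h : npow1 x n = 0) :
    ∀ k, n ≤ k → npow1 x k = 0 := by
  intro k hk
  induction k, hk using Nat.le_induction with
  | base => exact h
  | succ k hk ih =>
    show npow1 x k * x = 0
    rw [ih, zero_mul]

lemma exists_sq_zero {x : Q} (hx : x ≠ 0) (hn : ∃ n, npow1 x n = 0) :
    ∃ y : Q, y ≠ 0 ∧ y * y = 0 := by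
  classical
  obtain ⟨m, hm0, hmin⟩ : ∃ m, npow1 x m = 0 ∧ ∀ k < m, npow1 x k ≠ 0 :=
    ⟨Nat.find hn, Nat.find_spec hn, fun k hk => Nat.find_min hn hk⟩
  match m, hm0, hmin with
  | 0, hm0, _ => exact absurd hm0 hx
  | (m + 1), hm0, hmin =>
    refine ⟨npow1 x m, hmin m (Nat.lt_succ_self m), ?_⟩
    rw [← npow1_add]
    exact npow1_zero_of_le hm0 _ (by omega)

/-- The right annihilator as an additive subgroup. -/
def rannSub (S : Set Q) : AddSubgroup Q where
  carrier := rann S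
  add_mem' := fun {a b} ha hb s hs => by
    rw [mul_add, ha s hs, hb s hs, add_zero]
  zero_mem' := fun s _ => mul_zero s
  neg_mem' := fun {a} ha s hs => by rw [mul_neg, ha s hs, neg_zero]

lemma coe_rannSub (S : Set Q) : ((rannSub S : AddSubgroup Q) : Set Q) = rann S := rfl

/-- Key annihilator facts for a proper nonzero annihilator right ideal of a prime ring:
with `B = R ∩ lann R`, we have `rann B ⊆ R` and `lann B ⊆ lann R`. -/
lemma main_aux (hprime : IsPrimeRing Q) (R : AddSubgroup Q) (hRI : IsRightIdeal R)
    (hR0 : R ≠ ⊥) (hRT : R ≠ ⊤) (S₀ : Set Q) (hS : (R : Set Q) = rann S₀) :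
    (∀ a : Q, (∀ b ∈ (R : Set Q) ∩ lann (R : Set Q), b * a = 0) → a ∈ R) ∧
    (∀ t : Q, (∀ b ∈ (R : Set Q) ∩ lann (R : Set Q), t * b = 0) →
      t ∈ lann (R : Set Q)) := by
  -- a nonzero element of R
  obtain ⟨r₀, hr₀R, hr₀⟩ : ∃ r ∈ R, r ≠ 0 := by
    by_contra h
    push_neg at h
    exact hR0 (by rw [eq_bot_iff]; intro a ha; simpa using h a ha)
  -- S₀ ⊆ lann R
  have hS₀L : ∀ s ∈ S₀, s ∈ lann (R : Set Q) := by
    intro s hs r hr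
    rw [hS] at hr
    exact hr s hs
  -- R = rann (lann R)
  have hRr : ∀ a : Q, (∀ l ∈ lann (R : Set Q), l * a = 0) → a ∈ R := by
    intro a ha
    have h : a ∈ rann S₀ := fun s hs => ha s (hS₀L s hs)
    rw [← hS] at h
    exact h
  -- a nonzero element of lann R
  obtain ⟨l₀, hl₀L, hl₀⟩ : ∃ l ∈ lann (R : Set Q), l ≠ 0 := by
    by_contra h
    push_neg at h
    apply hRT
    rw [eq_top_iff]
    intro a _
    exact hRr a (fun l hl => by rw [h l hl, zero_mul])
  -- R · lann R ⊆ R ∩ lann R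
  have hRL : ∀ r ∈ R, ∀ l ∈ lann (R : Set Q),
      r * l ∈ (R : Set Q) ∩ lann (R : Set Q) := by
    intro r hr l hl
    refine ⟨hRI r hr l, fun r' hr' => ?_⟩
    rw [mul_assoc, hl r' hr', mul_zero]
  constructor
  · intro a ha
    apply hRr
    intro l hl
    rcases hprime r₀ (l * a) (fun x => by
      have h1 : r₀ * x ∈ R := hRI r₀ hr₀R x
      have h2 := ha _ (hRL _ h1 l hl)
      calc r₀ * x * (l * a) = r₀ * x * l * a := by rw [mul_assoc (r₀ * x)]
        _ = 0 := h2) with h | h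
    · exact absurd h hr₀
    · exact h
  · intro t ht r hr
    rcases hprime (t * r) l₀ (fun x => by
      have hxl : x * l₀ ∈ lann (R : Set Q) := fun r' hr' => by
        rw [mul_assoc, hl₀L r' hr', mul_zero]
      have hb := hRL r hr _ hxl
      have h2 := ht _ hb
      calc t * r * x * l₀ = t * (r * (x * l₀)) := by
            rw [mul_assoc, mul_assoc]
        _ = 0 := h2) with h | h
    · exact h
    · exact absurd h hl₀

end AuxLemmas

/-- Corollary 4.4: in a prime ring with nonzero core containing a nonzero nilpotent element,
the map `R ↦ R ∩ lann(R)` is a bijection from the set of proper nonzero annihilator right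
ideals of `Q` onto the set of maximal zero product subsets of `Q`. -/
theorem bijOn_annihilator_maxZeroProduct {Q : Type*} [NonUnitalRing Q]
    (hprime : IsPrimeRing Q) (hcore : ringCore Q ≠ ⊥)
    (hnilp : ∃ x : Q, x ≠ 0 ∧ ∃ n : ℕ, npow1 x n = 0) :
    Set.BijOn (fun R : AddSubgroup Q => (R : Set Q) ∩ lann (R : Set Q))
      {R : AddSubgroup Q |
        IsRightIdeal R ∧ R ≠ ⊥ ∧ R ≠ ⊤ ∧ ∃ S : Set Q, (R : Set Q) = rann S}
      {S : Set Q | IsMaxZeroProduct S} := by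
  obtain ⟨x, hx, hxn⟩ := hnilp
  obtain ⟨y, hy, hyy⟩ := exists_sq_zero hx hxn
  refine ⟨?_, ?_, ?_⟩
  -- MapsTo
  · rintro R ⟨hRI, hR0, hRT, S₀, hS⟩
    obtain ⟨key1, key2⟩ := main_aux hprime R hRI hR0 hRT S₀ hS
    refine ⟨⟨⟨0, R.zero_mem, fun s _ => zero_mul s⟩, ?_⟩, ?_⟩
    · rintro s ⟨_, hsL⟩ t ⟨htR, _⟩
      exact hsL t htR
    · intro T hT hBT
      apply Set.Subset.antisymm hBT
      intro t htT
      have h1 : t ∈ R := key1 t (fun b hb => hT.2 b (hBT hb) t htT)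
      have h2 : t ∈ lann (R : Set Q) := key2 t (fun b hb => hT.2 t htT b (hBT hb))
      exact ⟨h1, h2⟩
  -- InjOn
  · rintro R₁ ⟨hRI₁, hR0₁, hRT₁, S₁, hS₁⟩ R₂ ⟨hRI₂, hR0₂, hRT₂, S₂, hS₂⟩ heq
    simp only at heq
    obtain ⟨key1₁, _⟩ := main_aux hprime R₁ hRI₁ hR0₁ hRT₁ S₁ hS₁
    obtain ⟨key1₂, _⟩ := main_aux hprime R₂ hRI₂ hR0₂ hRT₂ S₂ hS₂
    have hset : (R₁ : Set Q) = (R₂ : Set Q) := by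
      apply Set.Subset.antisymm
      · intro a ha
        apply key1₂
        intro b hb
        rw [← heq] at hb
        exact hb.2 a ha
      · intro a ha
        apply key1₁
        intro b hb
        rw [heq] at hb
        exact hb.2 a ha
    exact SetLike.coe_injective hset
  -- SurjOn
  · rintro S ⟨⟨hSne, hSzp⟩, hmax⟩
    -- S contains a nonzero element
    obtain ⟨s₀, hs₀S, hs₀⟩ : ∃ s ∈ S, s ≠ 0 := by
      by_contra h
      push_neg at h
      have hsub : S ⊆ ({0, y} : Set Q) := fun s hs => Or.inl (h s hs)
      have hTzp : HasZeroProduct ({0, y} : Set Q) := by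
        refine ⟨⟨0, Or.inl rfl⟩, ?_⟩
        intro s hs t ht
        have hs' : s = 0 ∨ s = y := hs
        have ht' : t = 0 ∨ t = y := ht
        rcases hs' with rfl | rfl <;> rcases ht' with rfl | rfl <;>
          simp [hyy]
      have hST := hmax _ hTzp hsub
      have hyS : y ∈ S := by rw [hST]; exact Or.inr rfl
      exact hy (h y hyS)
    refine ⟨rannSub S, ⟨?_, ?_, ?_, S, rfl⟩, ?_⟩
    · -- right ideal
      intro r hr z s hs
      show s * (r * z) = 0
      rw [← mul_assoc, hr s hs, zero_mul]
    · -- ≠ ⊥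
      intro h
      have hmem : s₀ ∈ rannSub S := fun s hs => hSzp s hs s₀ hs₀S
      rw [h] at hmem
      exact hs₀ (by simpa using hmem)
    · -- ≠ ⊤
      intro h
      have hall : ∀ a : Q, s₀ * a = 0 := by
        intro a
        have : a ∈ rannSub S := by rw [h]; trivial
        exact this s₀ hs₀S
      rcases hprime s₀ s₀ (fun z => by rw [hall z, zero_mul]) with h' | h' <;>
        exact hs₀ h'
    · -- image is S
      have hSB : S ⊆ (rannSub S : Set Q) ∩ lann (rannSub S : Set Q) := by
        intro s hs
        refine ⟨fun s' hs' => hSzp s' hs' s hs, fun r hr => hr s hs⟩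
      have hBzp : HasZeroProduct ((rannSub S : Set Q) ∩ lann (rannSub S : Set Q)) := by
        refine ⟨⟨0, (rannSub S).zero_mem, fun s _ => zero_mul s⟩, ?_⟩
        rintro s ⟨_, hsL⟩ t ⟨htR, _⟩
        exact hsL t htR
      exact (hmax _ hBzp hSB).symm
end
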